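/- Let U ⊂ ℝ^N be a Lebesgue-measurable set of finite measure |U|, let u : U → ℝ be measurable, and let σ, r, Λ, S be positive real numbers with σ < r, (∫_U |u(x)|^r dx)^{1/r} ≤ S·Λ, and ∫_U |u(x)|^σ dx < ∞. Then ∫_U |u(x)|^σ · log|u(x)| dx ≤ ( |U|/(σ·e) + S^r/(e·(r−σ)) ) · Λ^σ + (log Λ)·∫_U |u(x)|^σ dx, where the integrand |u|^σ log|u| is interpreted as 0 at points where u(x) = 0 and e = exp(1). -/

import Mathlib

/-!
Split `log t = log (t / Λ) + log Λ`. The elementary bound `log s ≤ s / e`, applied to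
`s = (t / Λ) ^ (r - σ)`, trades `t ^ σ * log (t / Λ)` for a multiple of `t ^ r`, whose integral
is controlled by the `L^r` bound. Applied to `s = t ^ (-σ)` it bounds the negative part of
`t ^ σ * log t` by `1 / (σ e)`, which on a set of finite measure makes the integrand integrable.
-/

open MeasureTheory

namespace Real

theorem log_le_div_exp_one {s : ℝ} (hs : 0 ≤ s) : log s ≤ s / exp 1 := by
  rcases hs.eq_or_lt with rfl | hs
  · simp
  have h := log_le_sub_one_of_pos (div_pos hs (exp_pos 1))
  rw [log_div hs.ne' (exp_ne_zero 1), log_exp] at h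
  linarith

theorem mul_rpow_mul_log_le {t : ℝ} (ht : 0 < t) (σ a : ℝ) :
    a * (t ^ σ * log t) ≤ t ^ (σ + a) / exp 1 := by
  have h := mul_le_mul_of_nonneg_left (log_le_div_exp_one (rpow_nonneg ht.le a))
    (rpow_nonneg ht.le σ)
  rw [log_rpow ht] at h
  rw [rpow_add ht]
  linarith [show t ^ σ * (t ^ a / exp 1) = t ^ σ * t ^ a / exp 1 by ring]

theorem rpow_mul_log_le_rpow_div {σ r t : ℝ} (hσr : σ < r) (ht : 0 ≤ t) :
    t ^ σ * log t ≤ t ^ r / (exp 1 * (r - σ)) := by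
  have hrσ : 0 < r - σ := sub_pos.2 hσr
  rcases ht.eq_or_lt with rfl | ht
  · simp only [log_zero, mul_zero]; positivity
  have h := mul_rpow_mul_log_le ht σ (r - σ)
  rw [add_sub_cancel, le_div_iff₀ (exp_pos 1)] at h
  rw [le_div_iff₀ (by positivity)]
  linarith

theorem neg_rpow_mul_log_le {σ t : ℝ} (hσ : 0 < σ) (ht : 0 ≤ t) :
    -(t ^ σ * log t) ≤ 1 / (σ * exp 1) := by
  rcases ht.eq_or_lt with rfl | ht
  · simp only [log_zero, mul_zero, neg_zero]; positivity
  have h := mul_rpow_mul_log_le ht σ (-σ)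
  rw [add_neg_cancel, rpow_zero, le_div_iff₀ (exp_pos 1)] at h
  rw [le_div_iff₀ (by positivity)]
  linarith

theorem abs_rpow_mul_log_le {σ r t : ℝ} (hσ : 0 < σ) (hσr : σ < r) (ht : 0 ≤ t) :
    |t ^ σ * log t| ≤ 1 / (σ * exp 1) + t ^ r / (exp 1 * (r - σ)) := by
  have hrσ : 0 < r - σ := sub_pos.2 hσr
  have h₁ : 0 ≤ 1 / (σ * exp 1) := by positivity
  have h₂ : 0 ≤ t ^ r / (exp 1 * (r - σ)) := by positivity
  exact abs_le.2 ⟨by linarith [neg_rpow_mul_log_le hσ ht],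
    by linarith [rpow_mul_log_le_rpow_div hσr ht]⟩

theorem rpow_mul_log_le_rpow_div_add_log_mul {σ r Λ t : ℝ} (hσ : 0 < σ) (hσr : σ < r)
    (hΛ : 0 < Λ) (ht : 0 ≤ t) :
    t ^ σ * log t ≤ Λ ^ (σ - r) / (exp 1 * (r - σ)) * t ^ r + log Λ * t ^ σ := by
  rcases ht.eq_or_lt with rfl | ht
  · have hr : 0 < r := hσ.trans hσr
    simp [zero_rpow hσ.ne', zero_rpow hr.ne']
  have h := rpow_mul_log_le_rpow_div hσr (div_nonneg ht.le hΛ.le)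
  rw [div_rpow ht.le hΛ.le, div_rpow ht.le hΛ.le, log_div ht.ne' hΛ.ne'] at h
  have h := mul_le_mul_of_nonneg_left h (rpow_nonneg hΛ.le σ)
  have hΛσ : Λ ^ σ ≠ 0 := (rpow_pos_of_pos hΛ σ).ne'
  rw [rpow_sub hΛ]
  field_simp at h ⊢
  linarith

end Real

open Real

theorem integrableOn_rpow_mul_log {α : Type*} [MeasurableSpace α] {μ : Measure α} {U : Set α}
    {u : α → ℝ} {σ r : ℝ} (hμU : μ U ≠ ⊤) (hu : AEMeasurable u (μ.restrict U)) (hσ : 0 < σ)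
    (hσr : σ < r) (hur : IntegrableOn (fun x => |u x| ^ r) U μ) :
    IntegrableOn (fun x => |u x| ^ σ * log |u x|) U μ := by
  have hmeas : Measurable fun t : ℝ => |t| ^ σ * log |t| := by fun_prop
  refine Integrable.mono'
    ((integrableOn_const (C := 1 / (σ * exp 1)) hμU).add (hur.div_const (exp 1 * (r - σ))))
    (hmeas.comp_aemeasurable hu).aestronglyMeasurable (ae_of_all _ fun x => ?_)
  rw [norm_eq_abs]
  exact abs_rpow_mul_log_le hσ hσr (abs_nonneg _)

theorem log_weighted_norm_estimate'_general (N : ℕ) (U : Set (Fin N → ℝ))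
    (hUfin : volume U < ⊤)
    (u : (Fin N → ℝ) → ℝ) (hu : Measurable u)
    (σ r Λ S : ℝ) (hσ : 0 < σ) (hσr : σ < r) (hΛ : 0 < Λ) (hS : 0 < S)
    (hur : IntegrableOn (fun x => |u x| ^ r) U)
    (hnorm : (∫ x in U, |u x| ^ r) ^ (1 / r) ≤ S * Λ)
    (huσ : IntegrableOn (fun x => |u x| ^ σ) U) :
    (∫ x in U, |u x| ^ σ * Real.log |u x|) ≤
      ((volume U).toReal / (σ * Real.exp 1) + S ^ r / (Real.exp 1 * (r - σ))) * Λ ^ σ +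
        Real.log Λ * ∫ x in U, |u x| ^ σ := by
  have hr : 0 < r := hσ.trans hσr
  have hrσ : 0 < r - σ := sub_pos.2 hσr
  set c := Λ ^ (σ - r) / (exp 1 * (r - σ)) with hc_def
  have hur_le : ∫ x in U, |u x| ^ r ≤ (S * Λ) ^ r := by
    refine (rpow_inv_le_iff_of_pos (setIntegral_nonneg_of_ae ?_) (by positivity) hr).1 ?_
    · exact ae_of_all _ fun x => rpow_nonneg (abs_nonneg _) r
    · rwa [one_div] at hnorm
  have hc : c * (S * Λ) ^ r = S ^ r / (exp 1 * (r - σ)) * Λ ^ σ := by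
    have : Λ ^ r ≠ 0 := (rpow_pos_of_pos hΛ r).ne'
    rw [hc_def, mul_rpow hS.le hΛ.le, rpow_sub hΛ]
    field_simp
  have hvol : 0 ≤ (volume U).toReal / (σ * exp 1) * Λ ^ σ := by positivity
  calc ∫ x in U, |u x| ^ σ * log |u x|
      ≤ ∫ x in U, c * |u x| ^ r + log Λ * |u x| ^ σ :=
        setIntegral_mono (integrableOn_rpow_mul_log hUfin.ne hu.aemeasurable hσ hσr hur)
          ((hur.const_mul c).add (huσ.const_mul _))
          fun x => rpow_mul_log_le_rpow_div_add_log_mul hσ hσr hΛ (abs_nonneg _)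
    _ = c * (∫ x in U, |u x| ^ r) + log Λ * ∫ x in U, |u x| ^ σ := by
        rw [integral_add (hur.const_mul c) (huσ.const_mul _), integral_const_mul,
          integral_const_mul]
    _ ≤ c * (S * Λ) ^ r + log Λ * ∫ x in U, |u x| ^ σ := by
        gcongr
    _ ≤ _ := by rw [hc, add_mul]; linarith

/-- Estimate from the proof of Lemma 3.3: if `U ⊂ ℝ^N` has finite measure,
`0 < σ < r`, `Λ, S > 0`, `|u|^r` is integrable on `U` with `(∫_U |u|^r)^(1/r) ≤ S * Λ`,
and `|u|^σ` is integrable on `U`, then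
`∫_U |u|^σ * log|u| ≤ (|U|/(σ e) + S^r/(e (r - σ))) * Λ^σ + (log Λ) * ∫_U |u|^σ`
(the integrand `|u|^σ log|u|` is `0` where `u = 0`). -/
theorem log_weighted_norm_estimate' (N : ℕ) (U : Set (Fin N → ℝ))
    (hU : MeasurableSet U) (hUfin : volume U < ⊤)
    (u : (Fin N → ℝ) → ℝ) (hu : Measurable u)
    (σ r Λ S : ℝ) (hσ : 0 < σ) (hσr : σ < r) (hΛ : 0 < Λ) (hS : 0 < S)
    (hur : IntegrableOn (fun x => |u x| ^ r) U)
    (hnorm : (∫ x in U, |u x| ^ r) ^ (1 / r) ≤ S * Λ)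
    (huσ : IntegrableOn (fun x => |u x| ^ σ) U) :
    (∫ x in U, |u x| ^ σ * Real.log |u x|) ≤
      ((volume U).toReal / (σ * Real.exp 1) + S ^ r / (Real.exp 1 * (r - σ))) * Λ ^ σ +
        Real.log Λ * ∫ x in U, |u x| ^ σ :=
  log_weighted_norm_estimate'_general N U hUfin u hu σ r Λ S hσ hσr hΛ hS hur hnorm huσ
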